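/- Suppose parallel trends with respect to not-yet-treated groups holds: for all g ∈ {2, …, 𝒯}, all t with g ≤ t ≤ 𝒯, all d ∈ 𝒟₊, and every k ∈ {2, …, 𝒯+1} with k > t, E[Y_t(0) − Y_{t−1}(0) | G = g, D = d] = E[Y_t(0) − Y_{t−1}(0) | G = k]. Then for every g ∈ {2, …, 𝒯}, every t with g ≤ t ≤ 𝒯, and every d ∈ 𝒟₊: ATT(g, t, d | g, d) = E[Y_t − Y_{g−1} | G = g, D = d] − E[Y_t − Y_{g−1} | W_t = 0] (note P(W_t = 0) ≥ P(G = 𝒯+1) > 0). -/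

import Mathlib

/-!
Units not yet treated at time `t` are exactly those with `G > t`, i.e. the union of the cells
`{G = k}` for `t < k ≤ T + 1`. Parallel trends says that in each of these cells the mean
untreated increment `Y_s(0) - Y_{s-1}(0)`, `g ≤ s ≤ t`, equals the one in the cell
`{G = g, D = d}`, so the same holds for the union (a weighted average of the cells).
Telescoping the increments from `g - 1` to `t` and observing that the not-yet-treated units
reveal `Y_t(0)` while all units reveal `Y_{g-1}(0)` identifies the ATT.
-/

open MeasureTheory

/-- Conditional expectation of `X` given the event `A`: `E[X | A] = E[X·1_A] / P(A)`. -/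
noncomputable def cExp {Ω : Type*} [MeasurableSpace Ω] (P : Measure Ω)
    (X : Ω → ℝ) (A : Set Ω) : ℝ :=
  (∫ ω in A, X ω ∂P) / (P A).toReal

section ConditionalMean

variable {Ω : Type*} [MeasurableSpace Ω] {P : Measure Ω}

lemma cExp_congr {X Z : Ω → ℝ} {A : Set Ω} (hA : MeasurableSet A) (h : Set.EqOn X Z A) :
    cExp P X A = cExp P Z A := by
  rw [cExp, cExp, setIntegral_congr_fun hA h]

lemma cExp_sub {X Z : Ω → ℝ} (hX : Integrable X P) (hZ : Integrable Z P) (A : Set Ω) :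
    cExp P (fun ω => X ω - Z ω) A = cExp P X A - cExp P Z A := by
  rw [cExp, cExp, cExp, integral_sub hX.restrict hZ.restrict, sub_div]

lemma cExp_finset_sum {ι : Type*} (s : Finset ι) {X : ι → Ω → ℝ}
    (hX : ∀ i ∈ s, Integrable (X i) P) (A : Set Ω) :
    cExp P (fun ω => ∑ i ∈ s, X i ω) A = ∑ i ∈ s, cExp P (X i) A := by
  rw [cExp, integral_finsetSum s fun i hi => (hX i hi).restrict, Finset.sum_div]
  rfl

lemma setIntegral_eq_cExp_mul [IsFiniteMeasure P] (X : Ω → ℝ) (A : Set Ω) :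
    ∫ ω in A, X ω ∂P = cExp P X A * (P A).toReal := by
  by_cases hA : P A = 0
  · simp [Measure.restrict_eq_zero.mpr hA, hA]
  · rw [cExp, div_mul_cancel₀]
    exact (ENNReal.toReal_pos hA (measure_ne_top P A)).ne'

lemma cExp_biUnion_finset [IsFiniteMeasure P] {ι : Type*} {s : Finset ι} {A : ι → Set Ω}
    (hA : ∀ i ∈ s, MeasurableSet (A i)) (hd : (s : Set ι).PairwiseDisjoint A)
    {X : Ω → ℝ} (hX : Integrable X P) (hpos : P (⋃ i ∈ s, A i) ≠ 0) {c : ℝ}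
    (hc : ∀ i ∈ s, cExp P X (A i) = c) :
    cExp P X (⋃ i ∈ s, A i) = c := by
  have hmass : (P (⋃ i ∈ s, A i)).toReal = ∑ i ∈ s, (P (A i)).toReal := by
    rw [measure_biUnion_finset hd hA, ENNReal.toReal_sum fun i _ => measure_ne_top P _]
  have hint : ∫ ω in ⋃ i ∈ s, A i, X ω ∂P = c * (P (⋃ i ∈ s, A i)).toReal := by
    rw [integral_biUnion_finset s hA hd fun i _ => hX.integrableOn, hmass, Finset.mul_sum]
    exact Finset.sum_congr rfl fun i hi => by rw [setIntegral_eq_cExp_mul, hc i hi]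
  rw [cExp, hint, mul_div_cancel_right₀]
  exact (ENNReal.toReal_pos hpos (measure_ne_top P _)).ne'

lemma cExp_sub_eq_sum_increments {Y : ℕ → Ω → ℝ} (hY : ∀ t, Integrable (Y t) P)
    {a b : ℕ} (hab : a ≤ b) (A : Set Ω) :
    cExp P (fun ω => Y b ω - Y a ω) A =
      ∑ i ∈ Finset.Ico a b, cExp P (fun ω => Y (i + 1) ω - Y i ω) A := by
  have htelescope :
      (fun ω => Y b ω - Y a ω) = fun ω => ∑ i ∈ Finset.Ico a b, (Y (i + 1) ω - Y i ω) :=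
    funext fun ω => (Finset.sum_Ico_sub (fun i => Y i ω) hab).symm
  rw [htelescope]
  exact cExp_finset_sum _ (fun i _ => (hY (i + 1)).sub (hY i)) A

lemma cExp_setOf_lt_eq_of_fibers [IsFiniteMeasure P] {G : Ω → ℕ} (hG : Measurable G) {t N : ℕ}
    (hGN : ∀ ω, G ω ≤ N) (htN : t < N) (hN : 0 < P {ω | G ω = N}) {X : Ω → ℝ}
    (hX : Integrable X P) {c : ℝ} (hc : ∀ k, t < k → k ≤ N → cExp P X {ω | G ω = k} = c) :
    cExp P X {ω | t < G ω} = c := by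
  have hcover : {ω | t < G ω} = ⋃ k ∈ Finset.Ioc t N, {ω | G ω = k} := by
    ext ω
    simp only [Set.mem_ofPred_eq, Set.mem_iUnion, Finset.mem_Ioc, exists_prop]
    exact ⟨fun h => ⟨G ω, ⟨h, hGN ω⟩, rfl⟩, by rintro ⟨k, ⟨hk, -⟩, rfl⟩; exact hk⟩
  have hpos : P (⋃ k ∈ Finset.Ioc t N, {ω | G ω = k}) ≠ 0 :=
    (hN.trans_le <| measure_mono <| Set.subset_biUnion_of_mem (u := fun k => {ω | G ω = k})
      (Finset.mem_Ioc.mpr ⟨htN, le_rfl⟩)).ne'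
  rw [hcover]
  exact cExp_biUnion_finset (fun k _ => hG (measurableSet_singleton k))
    (Set.pairwiseDisjoint_fiber G _) hX hpos fun k hk => (Finset.mem_Ioc.mp hk).elim (hc k)

end ConditionalMean

theorem att_gtd_identified_not_yet_treated_general
    {Ω : Type*} [MeasurableSpace Ω] (P : Measure Ω) [IsProbabilityMeasure P]
    (T : ℕ)
    (Dpos : Finset ℝ)
    (D : Ω → ℝ) (hD : Measurable D)
    (G : Ω → ℕ) (hG : Measurable G)
    (hGrange : ∀ ω, 2 ≤ G ω ∧ G ω ≤ T + 1)
    (hD0G : ∀ ω, D ω = 0 ↔ G ω = T + 1)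
    (hpNever : 0 < P {ω | G ω = T + 1})
    (Y0 : ℕ → Ω → ℝ) (hY0i : ∀ t, Integrable (Y0 t) P)
    (Ypo : ℕ → ℕ → ℝ → Ω → ℝ)
    (hYpoi : ∀ t g dd, Integrable (Ypo t g dd) P)
    (Y : ℕ → Ω → ℝ)
    (hYobs : ∀ t ω, Y t ω = if t < G ω then Y0 t ω else Ypo t (G ω) (D ω) ω)
    (hPT : ∀ g : ℕ, 2 ≤ g → g ≤ T → ∀ t : ℕ, g ≤ t → t ≤ T → ∀ dd ∈ Dpos,
      ∀ k : ℕ, 2 ≤ k → k ≤ T + 1 → t < k →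
        cExp P (fun ω => Y0 t ω - Y0 (t - 1) ω) {ω | G ω = g ∧ D ω = dd} =
          cExp P (fun ω => Y0 t ω - Y0 (t - 1) ω) {ω | G ω = k}) :
    ∀ g : ℕ, 2 ≤ g → g ≤ T → ∀ t : ℕ, g ≤ t → t ≤ T → ∀ dd ∈ Dpos,
      cExp P (fun ω => Ypo t g dd ω - Y0 t ω) {ω | G ω = g ∧ D ω = dd} =
        cExp P (fun ω => Y t ω - Y (g - 1) ω) {ω | G ω = g ∧ D ω = dd} -
          cExp P (fun ω => Y t ω - Y (g - 1) ω)
            {ω | (if G ω ≤ t then D ω else 0) = 0} := by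
  intro g hg2 hgT t hgt htT dd hdd
  set A := {ω | G ω = g ∧ D ω = dd}
  have hA : MeasurableSet A :=
    (hG (measurableSet_singleton g)).inter (hD (measurableSet_singleton dd))
  have hnotyet : {ω | (if G ω ≤ t then D ω else 0) = 0} = {ω | t < G ω} := by
    ext ω
    by_cases h : G ω ≤ t <;> simp [h, hD0G] <;> omega
  have htrend : cExp P (fun ω => Y0 t ω - Y0 (g - 1) ω) {ω | t < G ω} =
      cExp P (fun ω => Y0 t ω - Y0 (g - 1) ω) A := by
    rw [cExp_sub_eq_sum_increments hY0i (by omega), cExp_sub_eq_sum_increments hY0i (by omega)]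
    refine Finset.sum_congr rfl fun i hi => ?_
    rw [Finset.mem_Ico] at hi
    refine cExp_setOf_lt_eq_of_fibers hG (fun ω => (hGrange ω).2) (by omega) hpNever
      (X := fun ω => Y0 (i + 1) ω - Y0 i ω) ((hY0i _).sub (hY0i _)) fun k htk hkT => ?_
    simpa only [Nat.add_sub_cancel] using
      (hPT g hg2 hgT (i + 1) (by omega) (by omega) dd hdd k (by omega) hkT (by omega)).symm
  have hobsA : cExp P (fun ω => Y t ω - Y (g - 1) ω) A =
      cExp P (fun ω => Ypo t g dd ω - Y0 (g - 1) ω) A :=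
    cExp_congr hA fun ω ⟨hGω, hDω⟩ => by
      rw [hYobs, hYobs, hGω, hDω, if_neg (by omega), if_pos (by omega)]
  have hobsU : cExp P (fun ω => Y t ω - Y (g - 1) ω) {ω | t < G ω} =
      cExp P (fun ω => Y0 t ω - Y0 (g - 1) ω) {ω | t < G ω} :=
    cExp_congr (hG measurableSet_Ioi) fun ω (hω : t < G ω) => by
      rw [hYobs, hYobs, if_pos hω, if_pos (by omega)]
  rw [hnotyet, hobsA, hobsU, htrend, cExp_sub (hYpoi t g dd) (hY0i t),
    cExp_sub (hYpoi t g dd) (hY0i (g - 1)), cExp_sub (hY0i t) (hY0i (g - 1))]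
  ring

/-- Under parallel trends with respect to not-yet-treated groups, for
every group `g ∈ {2,…,T}`, post-treatment period `t` with `g ≤ t ≤ T`, and dose
`d ∈ 𝒟₊`, the group-time ATT is identified by comparison with not-yet-treated units:
`ATT(g,t,d|g,d) = E[Y_t − Y_{g−1} | G = g, D = d] − E[Y_t − Y_{g−1} | W_t = 0]`. -/
theorem att_gtd_identified_not_yet_treated
    {Ω : Type*} [MeasurableSpace Ω] (P : Measure Ω) [IsProbabilityMeasure P]
    (T : ℕ) (hT : 2 ≤ T)
    (Dpos : Finset ℝ) (hDposNe : Dpos.Nonempty) (hDposPos : ∀ d ∈ Dpos, (0 : ℝ) < d)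
    (D : Ω → ℝ) (hD : Measurable D)
    (G : Ω → ℕ) (hG : Measurable G)
    (hGrange : ∀ ω, 2 ≤ G ω ∧ G ω ≤ T + 1)
    (hDval : ∀ ω, D ω = 0 ∨ D ω ∈ Dpos)
    (hD0G : ∀ ω, D ω = 0 ↔ G ω = T + 1)
    (hpNever : 0 < P {ω | G ω = T + 1})
    (hpgd : ∀ g : ℕ, 2 ≤ g → g ≤ T → ∀ d ∈ Dpos, 0 < P {ω | G ω = g ∧ D ω = d})
    (Y0 : ℕ → Ω → ℝ) (hY0m : ∀ t, Measurable (Y0 t)) (hY0i : ∀ t, Integrable (Y0 t) P)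
    (Ypo : ℕ → ℕ → ℝ → Ω → ℝ)
    (hYpom : ∀ t g dd, Measurable (Ypo t g dd)) (hYpoi : ∀ t g dd, Integrable (Ypo t g dd) P)
    (hNoAnt : ∀ t g : ℕ, ∀ dd ∈ Dpos, 2 ≤ g → g ≤ T → t < g → Ypo t g dd = Y0 t)
    (Y : ℕ → Ω → ℝ)
    (hYobs : ∀ t ω, Y t ω = if t < G ω then Y0 t ω else Ypo t (G ω) (D ω) ω)
    (hPT : ∀ g : ℕ, 2 ≤ g → g ≤ T → ∀ t : ℕ, g ≤ t → t ≤ T → ∀ dd ∈ Dpos,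
      ∀ k : ℕ, 2 ≤ k → k ≤ T + 1 → t < k →
        cExp P (fun ω => Y0 t ω - Y0 (t - 1) ω) {ω | G ω = g ∧ D ω = dd} =
          cExp P (fun ω => Y0 t ω - Y0 (t - 1) ω) {ω | G ω = k}) :
    ∀ g : ℕ, 2 ≤ g → g ≤ T → ∀ t : ℕ, g ≤ t → t ≤ T → ∀ dd ∈ Dpos,
      cExp P (fun ω => Ypo t g dd ω - Y0 t ω) {ω | G ω = g ∧ D ω = dd} =
        cExp P (fun ω => Y t ω - Y (g - 1) ω) {ω | G ω = g ∧ D ω = dd} -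
          cExp P (fun ω => Y t ω - Y (g - 1) ω)
            {ω | (if G ω ≤ t then D ω else 0) = 0} :=
  att_gtd_identified_not_yet_treated_general P T Dpos D hD G hG hGrange hD0G hpNever Y0 hY0i Ypo
    hYpoi Y hYobs hPT
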